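/- arXiv:2602.09644 — 3 statements merged into one kernel-verified Lean document; each statement's English description precedes it below -/
import Mathlib

section
/- Let a, b, d_u, d_v, L_x, L_y > 0 and assume (a + b)³ > b − a. Then p + r > 0 for every mode (k_x, k_y) ∈ ℕ². Consequently, at τ = 0 the characteristic function of mode (k_x, k_y) has a root with positive real part if and only if q + s < 0: when the homogeneous steady state is stable without diffusion, instability of a mode at zero delay is equivalent to the Turing condition q + s < 0 for that mode. -/
noncomputable def Kmode (Lx Ly : ℝ) (kx ky : ℕ) : ℝ :=
  Real.pi ^ 2 * ((kx : ℝ) ^ 2 / Lx ^ 2 + (ky : ℝ) ^ 2 / Ly ^ 2)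

noncomputable def uStar (a b : ℝ) : ℝ := a + b

noncomputable def vStar (a b : ℝ) : ℝ := b / (a + b) ^ 2

/-- coefficient `p` of the LI characteristic equation. -/
noncomputable def pCoef (a b du dv Lx Ly : ℝ) (kx ky : ℕ) : ℝ :=
  (du + dv) * Kmode Lx Ly kx ky + uStar a b ^ 2 + 4 * uStar a b * vStar a b + 1

/-- coefficient `q` of the LI characteristic equation. -/
noncomputable def qCoef (a b du dv Lx Ly : ℝ) (kx ky : ℕ) : ℝ :=
  du * dv * Kmode Lx Ly kx ky ^ 2
    + (dv + du * uStar a b ^ 2 + 4 * dv * uStar a b * vStar a b) * Kmode Lx Ly kx ky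
    + uStar a b ^ 2

/-- coefficient `r` of the LI characteristic equation. -/
noncomputable def rCoef (a b : ℝ) : ℝ := -6 * uStar a b * vStar a b

/-- coefficient `s` of the LI characteristic equation. -/
noncomputable def sCoef (a b dv Lx Ly : ℝ) (kx ky : ℕ) : ℝ :=
  -6 * dv * Kmode Lx Ly kx ky * uStar a b * vStar a b

/-- the characteristic function `D(λ) = λ² + pλ + q + (rλ + s)e^{-λτ}` of mode `(kx, ky)`. -/
noncomputable def Dchar (a b du dv Lx Ly : ℝ) (kx ky : ℕ) (τ : ℝ) (z : ℂ) : ℂ :=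
  z ^ 2 + (pCoef a b du dv Lx Ly kx ky : ℂ) * z + (qCoef a b du dv Lx Ly kx ky : ℂ)
    + ((rCoef a b : ℂ) * z + (sCoef a b dv Lx Ly kx ky : ℂ)) * Complex.exp (-z * (τ : ℂ))

lemma quad_root_iff (P Q : ℝ) (hP : 0 < P) :
    (∃ z : ℂ, z ^ 2 + (P : ℂ) * z + (Q : ℂ) = 0 ∧ 0 < z.re) ↔ Q < 0 := by
  constructor
  · rintro ⟨z, hz, hre⟩
    by_contra hQ
    push_neg at hQ
    rw [pow_two] at hz
    have h1 := congrArg Complex.re hz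
    have h2 := congrArg Complex.im hz
    simp [Complex.add_re, Complex.add_im, Complex.mul_re, Complex.mul_im] at h1 h2
    have him : z.im * (2 * z.re + P) = 0 := by linear_combination h2
    have hne : 2 * z.re + P ≠ 0 := by positivity
    have hy : z.im = 0 := by
      rcases mul_eq_zero.mp him with h | h
      · exact h
      · exact absurd h hne
    rw [hy] at h1
    simp at h1
    nlinarith
  · intro hQ
    have hdisc : (0:ℝ) ≤ P ^ 2 - 4 * Q := by nlinarith
    have hs : Real.sqrt (P ^ 2 - 4 * Q) ^ 2 = P ^ 2 - 4 * Q := Real.sq_sqrt hdisc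
    set x : ℝ := (-P + Real.sqrt (P ^ 2 - 4 * Q)) / 2 with hxdef
    have hx : x ^ 2 + P * x + Q = 0 := by
      rw [hxdef]; nlinarith [hs]
    refine ⟨(x : ℂ), ?_, ?_⟩
    · exact_mod_cast congrArg (fun t : ℝ => (t : ℂ)) hx
    · have h1 : P < Real.sqrt (P ^ 2 - 4 * Q) := by
        have h2 : Real.sqrt (P ^ 2) < Real.sqrt (P ^ 2 - 4 * Q) :=
          Real.sqrt_lt_sqrt (by positivity) (by linarith)
        rwa [Real.sqrt_sq hP.le] at h2
      simp only [Complex.ofReal_re, hxdef]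
      linarith

lemma Dchar_zero (a b du dv Lx Ly : ℝ) (kx ky : ℕ) (z : ℂ) :
    Dchar a b du dv Lx Ly kx ky 0 z =
      z ^ 2 + ((pCoef a b du dv Lx Ly kx ky + rCoef a b : ℝ) : ℂ) * z
        + ((qCoef a b du dv Lx Ly kx ky + sCoef a b dv Lx Ly kx ky : ℝ) : ℂ) := by
  simp [Dchar]
  ring

/-- If `(a + b)³ > b - a` then `p + r > 0` for every mode, and at zero delay a mode has a
characteristic root with positive real part iff the Turing condition `q + s < 0` holds. -/
theorem LI_instability_iff_Turing_condition
    (a b du dv Lx Ly : ℝ) (ha : 0 < a) (hb : 0 < b) (hdu : 0 < du) (hdv : 0 < dv)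
    (hLx : 0 < Lx) (hLy : 0 < Ly) (hstab : b - a < (a + b) ^ 3) :
    (∀ kx ky : ℕ, 0 < pCoef a b du dv Lx Ly kx ky + rCoef a b) ∧
    (∀ kx ky : ℕ,
      (∃ z : ℂ, Dchar a b du dv Lx Ly kx ky 0 z = 0 ∧ 0 < z.re) ↔
        qCoef a b du dv Lx Ly kx ky + sCoef a b dv Lx Ly kx ky < 0) := by
  have hc : 0 < a + b := by linarith
  have hP : ∀ kx ky : ℕ, 0 < pCoef a b du dv Lx Ly kx ky + rCoef a b := by
    intro kx ky
    have hK : 0 ≤ Kmode Lx Ly kx ky := by unfold Kmode; positivity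
    have h3 : (a + b) * (b / (a + b) ^ 2) * (a + b) = b := by field_simp
    unfold pCoef rCoef uStar vStar
    nlinarith [mul_nonneg (by linarith : (0:ℝ) ≤ du + dv) hK, sq_nonneg (a + b),
      mul_pos hc hc, h3]
  refine ⟨hP, fun kx ky => ?_⟩
  have := quad_root_iff (pCoef a b du dv Lx Ly kx ky + rCoef a b)
    (qCoef a b du dv Lx Ly kx ky + sCoef a b dv Lx Ly kx ky) (hP kx ky)
  simp only [Dchar_zero]
  exact this
end

section
/- Let a, b, d_u, d_v, L_x, L_y > 0 and k_x, k_y ∈ ℕ, and suppose q + s < 0 for the mode (k_x, k_y). Then for every delay τ ≥ 0 the characteristic function D of mode (k_x, k_y) has a real root λ > 0. In particular, a Turing-unstable mode of the LI model remains unstable for every value of the gene expression time delay. -/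
/-- A Turing-unstable mode (`q + s < 0`) has a positive real characteristic root for every
delay `τ ≥ 0`: Turing instability of the LI model persists under gene expression delay. -/
theorem LI_Turing_unstable_mode_persists
    (a b du dv Lx Ly : ℝ) (ha : 0 < a) (hb : 0 < b) (hdu : 0 < du) (hdv : 0 < dv)
    (hLx : 0 < Lx) (hLy : 0 < Ly) (kx ky : ℕ)
    (hTuring : qCoef a b du dv Lx Ly kx ky + sCoef a b dv Lx Ly kx ky < 0) :
    ∀ τ : ℝ, 0 ≤ τ → ∃ lam : ℝ, 0 < lam ∧ Dchar a b du dv Lx Ly kx ky τ (lam : ℂ) = 0 := by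
  intro τ hτ
  set p := pCoef a b du dv Lx Ly kx ky with hp
  set q := qCoef a b du dv Lx Ly kx ky with hq
  set r := rCoef a b with hr
  set s := sCoef a b dv Lx Ly kx ky with hs
  -- real characteristic function
  set f : ℝ → ℝ := fun x => x ^ 2 + p * x + q + (r * x + s) * Real.exp (-x * τ) with hf
  have hK : 0 ≤ Kmode Lx Ly kx ky := by
    have := Real.pi_pos
    have h1 : (0:ℝ) ≤ (kx : ℝ) ^ 2 / Lx ^ 2 := by positivity
    have h2 : (0:ℝ) ≤ (ky : ℝ) ^ 2 / Ly ^ 2 := by positivity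
    unfold Kmode; positivity
  have hu : 0 < uStar a b := by unfold uStar; linarith
  have hv : 0 < vStar a b := by unfold vStar; positivity
  have hppos : 0 < p := by
    rw [hp]; unfold pCoef
    have : 0 ≤ (du + dv) * Kmode Lx Ly kx ky := by positivity
    nlinarith [sq_nonneg (uStar a b)]
  have hrneg : r < 0 := by
    rw [hr]; unfold rCoef; nlinarith
  have hf0 : f 0 < 0 := by
    simp only [hf]
    simp [hTuring]
  -- choose M large
  set M : ℝ := |r| + |q + s| + 1 with hM
  have hM1 : 1 ≤ M := by
    have := abs_nonneg r; have := abs_nonneg (q + s); linarith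
  have hfM : 0 ≤ f M := by
    have hMpos : 0 < M := by linarith
    have hexp1 : Real.exp (-M * τ) ≤ 1 := by
      apply Real.exp_le_one_iff.mpr; nlinarith
    have hexppos : 0 < Real.exp (-M * τ) := Real.exp_pos _
    have hrMs : r * M + s ≤ 0 := by
      have hs0 : s ≤ 0 := by
        rw [hs]; unfold sCoef
        have : 0 ≤ 6 * dv * Kmode Lx Ly kx ky * uStar a b * vStar a b := by positivity
        nlinarith
      nlinarith
    have hstep : (r * M + s) * Real.exp (-M * τ) ≥ r * M + s := by nlinarith
    have habs_r : r ≤ |r| := le_abs_self r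
    have habs_r' : -|r| ≤ r := neg_abs_le r
    have habs_qs : -|q + s| ≤ q + s := neg_abs_le _
    have hMr : |q + s| + 1 ≤ M + r := by linarith
    have hM0 : 0 ≤ M := by linarith
    have h1 : M * (|q + s| + 1) ≤ M * (M + r) :=
      mul_le_mul_of_nonneg_left hMr hM0
    have h2 : |q + s| + 1 ≤ M * (|q + s| + 1) := by
      nlinarith [abs_nonneg (q + s)]
    have hring : M * (M + r) = M ^ 2 + r * M := by ring
    have hkey : M ^ 2 + r * M + (q + s) ≥ 0 := by linarith
    have hpM : 0 ≤ p * M := mul_nonneg hppos.le hM0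
    simp only [hf]
    linarith
  have hcont : ContinuousOn f (Set.Icc 0 M) := by
    apply Continuous.continuousOn
    fun_prop
  have h0M : (0:ℝ) ≤ M := by linarith
  have := intermediate_value_Ioc h0M hcont
  have hmem : (0:ℝ) ∈ Set.Ioc (f 0) (f M) := ⟨hf0, hfM⟩
  obtain ⟨lam, hlam, hflam⟩ := this hmem
  refine ⟨lam, hlam.1, ?_⟩
  have : ((f lam : ℝ) : ℂ) = Dchar a b du dv Lx Ly kx ky τ (lam : ℂ) := by
    simp only [hf, Dchar, ← hp, ← hq, ← hr, ← hs]
    push_cast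
    ring
  rw [← this, hflam]
  norm_num
end

section
/- Let a, b, d_u, d_v > 0 with u* = a + b, v* = b/(a+b)². There exists L₀ > 0, depending only on a, b, d_u, d_v, such that whenever 0 < L_x ≤ L₀ and 0 < L_y ≤ L₀, every mode (k_x, k_y) ∈ ℕ² with (k_x, k_y) ≠ (0, 0) satisfies q + s > 0. Hence on a sufficiently small domain no spatially nonconstant mode is Turing-unstable at zero delay, and if moreover (a + b)³ > b − a then at τ = 0 all characteristic roots of all modes have negative real part. -/
lemma quad_root_neg_re (P Q : ℝ) (hP : 0 < P) (hQ : 0 < Q) (z : ℂ)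
    (hz : z ^ 2 + (P : ℂ) * z + (Q : ℂ) = 0) : z.re < 0 := by
  by_contra h
  push_neg at h
  have hre := congrArg Complex.re hz
  have him := congrArg Complex.im hz
  simp [pow_two, Complex.add_re, Complex.add_im, Complex.mul_re, Complex.mul_im] at hre him
  have h2 : z.im * (2 * z.re + P) = 0 := by linear_combination him
  rcases mul_eq_zero.mp h2 with hy | hy
  · rw [hy] at hre; nlinarith
  · nlinarith

set_option maxHeartbeats 800000 in
/-- On a sufficiently small domain no spatially nonconstant mode is Turing-unstable at zero
delay (`q + s > 0` whenever `(kx, ky) ≠ (0, 0)`), and if moreover `(a + b)³ > b - a` then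
at `τ = 0` all characteristic roots of all modes have negative real part. -/
theorem LI_small_domain_no_Turing_instability
    (a b du dv : ℝ) (ha : 0 < a) (hb : 0 < b) (hdu : 0 < du) (hdv : 0 < dv) :
    ∃ L0 : ℝ, 0 < L0 ∧
      ∀ Lx Ly : ℝ, 0 < Lx → Lx ≤ L0 → 0 < Ly → Ly ≤ L0 →
        (∀ kx ky : ℕ, (kx, ky) ≠ (0, 0) →
            0 < qCoef a b du dv Lx Ly kx ky + sCoef a b dv Lx Ly kx ky) ∧
        (b - a < (a + b) ^ 3 →
          ∀ kx ky : ℕ, ∀ z : ℂ, Dchar a b du dv Lx Ly kx ky 0 z = 0 → z.re < 0) := by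
  have hU : 0 < a + b := by linarith
  have hpi := Real.pi_pos
  set c : ℝ := dv + du * (a + b) ^ 2 - 2 * dv * (b / (a + b)) with hc
  set M : ℝ := max ((|c| + 1) / (du * dv)) 1 with hMdef
  have hM1 : (1 : ℝ) ≤ M := le_max_right _ _
  have hM0 : (0 : ℝ) < M := lt_of_lt_of_le one_pos hM1
  have hMc : (|c| + 1) / (du * dv) ≤ M := le_max_left _ _
  refine ⟨Real.pi / Real.sqrt M, by positivity, ?_⟩
  intro Lx Ly hLx hLxL hLy hLyL
  -- key: for any admissible L and k ≥ 1, π² * (k²/L²) ≥ M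
  have key : ∀ L : ℝ, 0 < L → L ≤ Real.pi / Real.sqrt M → ∀ k : ℕ, 1 ≤ k →
      M ≤ Real.pi ^ 2 * ((k : ℝ) ^ 2 / L ^ 2) := by
    intro L hL hLle k hk
    have hsM : 0 < Real.sqrt M := Real.sqrt_pos.mpr hM0
    have h1 : L * Real.sqrt M ≤ Real.pi := by
      rw [div_eq_mul_inv] at hLle
      calc L * Real.sqrt M ≤ Real.pi * (Real.sqrt M)⁻¹ * Real.sqrt M := by
            apply mul_le_mul_of_nonneg_right hLle hsM.le
        _ = Real.pi := by field_simp
    have h2 : L ^ 2 * M ≤ Real.pi ^ 2 := by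
      have := Real.sq_sqrt hM0.le
      nlinarith [mul_pos hL hsM]
    have hk1 : (1 : ℝ) ≤ (k : ℝ) ^ 2 := by
      have : (1 : ℝ) ≤ (k : ℝ) := by exact_mod_cast hk
      nlinarith
    have hL2 : (0 : ℝ) < L ^ 2 := by positivity
    rw [← mul_div_assoc, le_div_iff₀ hL2]
    nlinarith [hM0.le, hL2]
  have hqs : ∀ kx ky : ℕ, qCoef a b du dv Lx Ly kx ky + sCoef a b dv Lx Ly kx ky
      = du * dv * (Kmode Lx Ly kx ky) ^ 2 + c * (Kmode Lx Ly kx ky) + (a + b) ^ 2 := by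
    intro kx ky
    simp only [qCoef, sCoef, uStar, vStar, hc]
    field_simp
    ring
  have hpart1 : ∀ kx ky : ℕ, (kx, ky) ≠ (0, 0) →
      0 < qCoef a b du dv Lx Ly kx ky + sCoef a b dv Lx Ly kx ky := by
    intro kx ky hne
    have hA : (0 : ℝ) ≤ Real.pi ^ 2 * ((kx : ℝ) ^ 2 / Lx ^ 2) := by positivity
    have hB : (0 : ℝ) ≤ Real.pi ^ 2 * ((ky : ℝ) ^ 2 / Ly ^ 2) := by positivity
    have hKM : M ≤ Kmode Lx Ly kx ky := by
      unfold Kmode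
      rw [mul_add]
      rcases Nat.eq_zero_or_pos kx with h0 | h1
      · have hky : 1 ≤ ky := by
          rcases Nat.eq_zero_or_pos ky with h | h
          · exact absurd (by rw [h0, h]) hne
          · exact h
        linarith [key Ly hLy hLyL ky hky]
      · linarith [key Lx hLx hLxL kx h1]
    set K := Kmode Lx Ly kx ky with hK
    have hK0 : 0 < K := lt_of_lt_of_le hM0 hKM
    have hcd : |c| + 1 ≤ du * dv * K := by
      have h6 := hMc.trans hKM
      rw [div_le_iff₀ (by positivity)] at h6
      linarith
    have h3 : 1 ≤ du * dv * K + c := by nlinarith [neg_abs_le c]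
    have h7 := mul_le_mul_of_nonneg_left h3 hK0.le
    rw [hqs]
    have h9 : du * dv * K ^ 2 + c * K = K * (du * dv * K + c) := by ring
    rw [← hK, h9]
    nlinarith
  refine ⟨hpart1, ?_⟩
  intro hcond kx ky z hz
  set K := Kmode Lx Ly kx ky with hK
  have hK0 : (0 : ℝ) ≤ K := by rw [hK]; unfold Kmode; positivity
  have hpr : pCoef a b du dv Lx Ly kx ky + rCoef a b
      = (du + dv) * K + ((a + b) ^ 2 - 2 * b / (a + b) + 1) := by
    simp only [pCoef, rCoef, uStar, vStar, hK]
    field_simp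
    ring
  have h5 : 2 * b / (a + b) < (a + b) ^ 2 + 1 := (div_lt_iff₀ hU).mpr (by nlinarith)
  have hP : 0 < pCoef a b du dv Lx Ly kx ky + rCoef a b := by
    rw [hpr]
    have : (0 : ℝ) ≤ (du + dv) * K := by positivity
    linarith
  have hQ : 0 < qCoef a b du dv Lx Ly kx ky + sCoef a b dv Lx Ly kx ky := by
    by_cases h00 : (kx, ky) = (0, 0)
    · obtain ⟨h1, h2⟩ := Prod.mk.injEq .. ▸ h00
      rw [hqs]
      have : K = 0 := by subst h1; subst h2; simp [hK, Kmode]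
      rw [← hK, this]
      nlinarith
    · exact hpart1 kx ky h00
  simp only [Dchar, Complex.ofReal_zero, mul_zero, Complex.exp_zero, mul_one] at hz
  apply quad_root_neg_re (pCoef a b du dv Lx Ly kx ky + rCoef a b)
    (qCoef a b du dv Lx Ly kx ky + sCoef a b dv Lx Ly kx ky) hP hQ z
  push_cast
  linear_combination hz
end
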